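/- arXiv:2101.07369 — 5 statements merged into one kernel-verified Lean document; each statement's English description precedes it below -/
import Mathlib

section
/- For every complex number z in the set S = {z : |Arg z| ≥ 3π/4} ∪ {0}, the real part of the complementary error function satisfies Re(erfc(z)) ≥ 1, with equality if and only if z = 0. -/
open Complex MeasureTheory

/-- The error function, `erf z = (2/√π) ∫₀^z e^{-u²} du`, integrated along the
segment from `0` to `z` (the integrand is entire, so the path is immaterial). -/
noncomputable def erf (z : ℂ) : ℂ :=
  (2 / Real.sqrt Real.pi : ℝ) * ∫ t in (0:ℝ)..1, z * Complex.exp (-((t : ℂ) * z) ^ 2)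

/-- The complementary error function, `erfc z = (2/√π) ∫_z^∞ e^{-u²} du`,
integrated along the horizontal ray from `z` to `+∞`. -/
noncomputable def erfc (z : ℂ) : ℂ :=
  (2 / Real.sqrt Real.pi : ℝ) * ∫ t in Set.Ioi (0:ℝ), Complex.exp (-(z + (t : ℂ)) ^ 2)

open Set

private lemma gauss_int : Integrable (fun x : ℝ => Real.exp (-x^2)) := by
  simpa using integrable_exp_neg_mul_sq (one_pos)

private lemma g_int (y : ℝ) :
    Integrable (fun s : ℝ => Real.exp (-s^2) * Real.cos (2*s*y)) := by
  refine gauss_int.mono' ?_ ?_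
  · exact ((Real.continuous_exp.comp (by continuity)).mul
      (Real.continuous_cos.comp (by continuity))).aestronglyMeasurable
  · filter_upwards with s
    rw [norm_mul, Real.norm_eq_abs, Real.norm_eq_abs, abs_of_pos (Real.exp_pos _)]
    calc Real.exp (-s^2) * |Real.cos (2*s*y)| ≤ Real.exp (-s^2) * 1 := by
          gcongr; exact Real.abs_cos_le_one _
      _ = Real.exp (-s^2) := mul_one _

private lemma shift_Ioi (a : ℝ) (f : ℝ → ℝ) :
    ∫ t in Ioi (0:ℝ), f (t + a) = ∫ s in Ioi a, f s := by
  have h := (measurePreserving_add_right (volume : Measure ℝ) a).setIntegral_preimage_emb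
    ((Homeomorph.addRight a).isClosedEmbedding.measurableEmbedding) f (Ioi a)
  rw [← h]; congr 1; ext t; simp

private lemma g_total (y : ℝ) :
    ∫ s : ℝ, Real.exp (-s^2) * Real.cos (2*s*y)
      = Real.sqrt Real.pi * Real.exp (-y^2) := by
  have h := GaussianFourier.integral_cexp_neg_mul_sq_add_real_mul_I (b := 1) (by simp) y
  have hint : Integrable (fun x : ℝ => Complex.exp (-1 * (x + y*Complex.I)^2)) :=
    GaussianFourier.integrable_cexp_neg_mul_sq_add_real_mul_I (by simp) y
  have hre := integral_re hint
  simp only [RCLike.re_to_complex] at hre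
  rw [h] at hre
  have hpt : ∀ x : ℝ, (Complex.exp (-1 * (x + y*Complex.I)^2)).re
      = Real.exp (y^2) * (Real.exp (-x^2) * Real.cos (2*x*y)) := by
    intro x
    rw [Complex.exp_re]
    have h1 : (-1 * ((x:ℂ) + y*Complex.I)^2).re = y^2 - x^2 := by
      simp [pow_two, Complex.mul_re, Complex.mul_im]; try ring
    have h2 : (-1 * ((x:ℂ) + y*Complex.I)^2).im = -(2*x*y) := by
      simp [pow_two, Complex.mul_re, Complex.mul_im]; try ring
    rw [h1, h2, Real.cos_neg, sub_eq_add_neg, Real.exp_add]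
    ring
  simp_rw [hpt, integral_const_mul] at hre
  have hrhs : (((Real.pi : ℂ) / 1) ^ (1/2 : ℂ)).re = Real.sqrt Real.pi := by
    rw [div_one]
    rw [show ((1:ℂ)/2) = ((1/2 : ℝ) : ℂ) by norm_num]
    rw [← Complex.ofReal_cpow Real.pi_pos.le]
    rw [Complex.ofReal_re, Real.sqrt_eq_rpow]
  rw [hrhs] at hre
  have hy : Real.exp (y^2) ≠ 0 := (Real.exp_pos _).ne'
  rw [Real.exp_neg]
  rw [eq_mul_inv_iff_mul_eq₀ hy]
  linear_combination hre

private lemma gauss_tail {a : ℝ} (ha : 0 < a) :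
    ∫ s in Ioi a, Real.exp (-s^2) < Real.exp (-a^2) * (Real.sqrt Real.pi / 2) := by
  have hs : ∫ s in Ioi a, Real.exp (-s^2) = ∫ t in Ioi (0:ℝ), Real.exp (-(t+a)^2) :=
    (shift_Ioi a fun s => Real.exp (-s^2)).symm
  have hIoi0 : ∫ t in Ioi (0:ℝ), Real.exp (-t^2) = Real.sqrt Real.pi / 2 := by
    simpa using integral_gaussian_Ioi 1
  have hint1 : IntegrableOn (fun t : ℝ => Real.exp (-(t+a)^2)) (Ioi 0) :=
    (gauss_int.comp_add_right a).integrableOn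
  have hint2 : IntegrableOn (fun t : ℝ => Real.exp (-a^2) * Real.exp (-t^2)) (Ioi 0) :=
    (gauss_int.const_mul _).integrableOn
  have hpos : 0 < ∫ t in Ioi (0:ℝ),
      (Real.exp (-a^2) * Real.exp (-t^2) - Real.exp (-(t+a)^2)) := by
    rw [setIntegral_pos_iff_support_of_nonneg_ae]
    · have hsub : Ioi (0:ℝ) ⊆ Function.support
          (fun t => Real.exp (-a^2) * Real.exp (-t^2) - Real.exp (-(t+a)^2)) := by
        intro t ht
        have hlt : Real.exp (-(t+a)^2) < Real.exp (-a^2) * Real.exp (-t^2) := by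
          rw [← Real.exp_add]
          apply Real.exp_lt_exp.2
          nlinarith [mem_Ioi.1 ht]
        simp only [Function.mem_support]
        exact sub_ne_zero.2 (ne_of_gt hlt)
      refine lt_of_lt_of_le ?_ (measure_mono (subset_inter hsub Subset.rfl))
      simp [Real.volume_Ioi]
    · filter_upwards [ae_restrict_mem measurableSet_Ioi] with t ht
      have : Real.exp (-(t+a)^2) ≤ Real.exp (-a^2) * Real.exp (-t^2) := by
        rw [← Real.exp_add]
        apply Real.exp_le_exp.2
        nlinarith [le_of_lt (mem_Ioi.1 ht)]
      simp only [Pi.zero_apply]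
      linarith
    · exact hint2.sub hint1
  rw [integral_sub hint2 hint1, integral_const_mul, hIoi0] at hpos
  rw [hs]
  linarith

private lemma erfc_re_eq (z : ℂ) : (erfc z).re
    = 2 / Real.sqrt Real.pi *
      (Real.exp (z.im^2) * ∫ s in Ioi z.re, Real.exp (-s^2) * Real.cos (2*s*z.im)) := by
  have h1 : ∀ t : ℝ, (-(z + (t:ℂ))^2).re = z.im^2 - (t+z.re)^2 := by
    intro t
    simp [pow_two, Complex.mul_re]; try ring
  have h2 : ∀ t : ℝ, (-(z + (t:ℂ))^2).im = -(2*(t+z.re)*z.im) := by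
    intro t
    simp [pow_two, Complex.mul_im]; try ring
  have hpt : ∀ t : ℝ, (Complex.exp (-(z + (t:ℂ))^2)).re
      = Real.exp (z.im^2) * (Real.exp (-(t+z.re)^2) * Real.cos (2*(t+z.re)*z.im)) := by
    intro t
    rw [Complex.exp_re, h1 t, h2 t, Real.cos_neg, sub_eq_add_neg, Real.exp_add]
    ring
  have hint : IntegrableOn (fun t : ℝ => Complex.exp (-(z + (t:ℂ))^2)) (Ioi 0) := by
    refine (Integrable.mono'
      (((gauss_int.comp_add_right z.re).const_mul (Real.exp (z.im^2)))) ?_ ?_).integrableOn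
    · exact (Complex.continuous_exp.comp (by continuity)).aestronglyMeasurable
    · filter_upwards with t
      rw [Complex.norm_exp, h1 t, sub_eq_add_neg, Real.exp_add]
  have hre := integral_re hint
  simp only [RCLike.re_to_complex] at hre
  have hstep : (erfc z).re
      = (2 / Real.sqrt Real.pi) * (∫ t in Ioi (0:ℝ), Complex.exp (-(z + (t:ℂ))^2)).re := by
    simp [erfc, Complex.mul_re]
  rw [hstep, ← hre]
  simp_rw [hpt]
  rw [integral_const_mul]
  congr 1
  congr 1
  exact shift_Ioi z.re (fun s => Real.exp (-s^2) * Real.cos (2*s*z.im))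

theorem re_erfc_ge_one_of_arg (z : ℂ) (hz : z = 0 ∨ 3 * Real.pi / 4 ≤ |z.arg|) :
    1 ≤ (erfc z).re ∧ ((erfc z).re = 1 ↔ z = 0) := by
  have hπ : (0:ℝ) < Real.sqrt Real.pi := Real.sqrt_pos.2 Real.pi_pos
  have h0 : (erfc (0:ℂ)).re = 1 := by
    rw [erfc_re_eq]
    simp only [Complex.zero_re, Complex.zero_im, mul_zero, Real.cos_zero, mul_one]
    have hI : ∫ s in Ioi (0:ℝ), Real.exp (-s^2) = Real.sqrt Real.pi / 2 := by
      simpa using integral_gaussian_Ioi 1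
    rw [hI, show (0:ℝ)^2 = 0 by ring, Real.exp_zero]
    field_simp
  have key : ∀ w : ℂ, w ≠ 0 → 3 * Real.pi / 4 ≤ |w.arg| → 1 < (erfc w).re := by
    intro w hw harg
    set x := w.re with hxdef
    set y := w.im with hydef
    have habs : 0 < ‖w‖ := norm_pos_iff.mpr hw
    have hargpi : |w.arg| ≤ Real.pi := Complex.abs_arg_le_pi w
    have h34 : Real.cos (3*Real.pi/4) = -(Real.sqrt 2/2) := by
      rw [show 3*Real.pi/4 = Real.pi - Real.pi/4 by ring, Real.cos_pi_sub,
        Real.cos_pi_div_four]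
    have hcos : Real.cos w.arg ≤ -(Real.sqrt 2/2) := by
      rw [← Real.cos_abs, ← h34]
      exact Real.cos_le_cos_of_nonneg_of_le_pi (by positivity) hargpi harg
    have hxval : x = ‖w‖ * Real.cos w.arg := by
      rw [Complex.cos_arg hw]
      field_simp
      exact hxdef
    have hs2 : (0:ℝ) < Real.sqrt 2 / 2 := by positivity
    have hx : x < 0 := by
      rw [hxval]
      exact mul_neg_of_pos_of_neg habs (by linarith)
    have hs2sq : (Real.sqrt 2/2)^2 = 1/2 := by
      rw [div_pow, Real.sq_sqrt (by norm_num : (0:ℝ) ≤ 2)]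
      norm_num
    have hcossq : (1:ℝ)/2 ≤ (Real.cos w.arg)^2 := by
      rw [← hs2sq, ← _root_.sq_abs (Real.cos w.arg)]
      apply pow_le_pow_left₀ hs2.le
      exact le_abs.mpr (Or.inr (by linarith))
    have hx2 : (‖w‖)^2 / 2 ≤ x^2 := by
      rw [hxval, mul_pow]
      nlinarith [sq_nonneg (‖w‖)]
    have hy2 : y^2 ≤ x^2 := by
      have hsq : (‖w‖)^2 = x^2 + y^2 := by
        rw [Complex.sq_norm, Complex.normSq_apply, ← hxdef, ← hydef]
        ring
      nlinarith
    -- bound the integral over `Iic x`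
    have hIic_split :
        (∫ s in Iic x, Real.exp (-s^2) * Real.cos (2*s*y))
          + ∫ s in Ioi x, Real.exp (-s^2) * Real.cos (2*s*y)
        = Real.sqrt Real.pi * Real.exp (-y^2) := by
      rw [intervalIntegral.integral_Iic_add_Ioi ((g_int y).integrableOn) ((g_int y).integrableOn)]
      exact g_total y
    have habs_bound : |∫ s in Iic x, Real.exp (-s^2) * Real.cos (2*s*y)|
        < Real.sqrt Real.pi / 2 * Real.exp (-y^2) := by
      have h1 : |∫ s in Iic x, Real.exp (-s^2) * Real.cos (2*s*y)|
          ≤ ∫ s in Iic x, Real.exp (-s^2) := by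
        have hn := norm_integral_le_integral_norm
          (μ := volume.restrict (Iic x)) (fun s => Real.exp (-s^2) * Real.cos (2*s*y))
        simp only [Real.norm_eq_abs] at hn
        refine hn.trans ?_
        refine setIntegral_mono_on ((g_int y).abs.integrableOn)
          (gauss_int.integrableOn) measurableSet_Iic ?_
        intro s _
        rw [abs_mul, abs_of_pos (Real.exp_pos _)]
        calc Real.exp (-s^2) * |Real.cos (2*s*y)| ≤ Real.exp (-s^2) * 1 := by
              gcongr; exact Real.abs_cos_le_one _
          _ = Real.exp (-s^2) := mul_one _
      have h2 : ∫ s in Iic x, Real.exp (-s^2) = ∫ s in Ioi (-x), Real.exp (-s^2) := by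
        have := integral_comp_neg_Iic x (fun s => Real.exp (-s^2))
        simpa [neg_sq] using this
      have h3 := gauss_tail (show (0:ℝ) < -x by linarith)
      rw [neg_sq] at h3
      have h4 : Real.exp (-x^2) ≤ Real.exp (-y^2) := Real.exp_le_exp.2 (by linarith)
      calc |∫ s in Iic x, Real.exp (-s^2) * Real.cos (2*s*y)|
          ≤ ∫ s in Iic x, Real.exp (-s^2) := h1
        _ = ∫ s in Ioi (-x), Real.exp (-s^2) := h2
        _ < Real.exp (-x^2) * (Real.sqrt Real.pi / 2) := h3
        _ ≤ Real.exp (-y^2) * (Real.sqrt Real.pi / 2) := by gcongr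
        _ = Real.sqrt Real.pi / 2 * Real.exp (-y^2) := by ring
    have hmain : Real.sqrt Real.pi / 2 * Real.exp (-y^2)
        < ∫ s in Ioi x, Real.exp (-s^2) * Real.cos (2*s*y) := by
      have hub := (abs_lt.1 habs_bound).2
      have h2x : Real.sqrt Real.pi * Real.exp (-y^2)
          = 2 * (Real.sqrt Real.pi / 2 * Real.exp (-y^2)) := by ring
      linarith
    rw [erfc_re_eq w]
    have hone : 2 / Real.sqrt Real.pi *
        (Real.exp (y^2) * (Real.sqrt Real.pi / 2 * Real.exp (-y^2))) = 1 := by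
      have hex : Real.exp (y^2) * Real.exp (-y^2) = 1 := by
        rw [← Real.exp_add]; simp
      field_simp
      nlinarith [hex]
    calc (1:ℝ) = 2 / Real.sqrt Real.pi *
        (Real.exp (y^2) * (Real.sqrt Real.pi / 2 * Real.exp (-y^2))) := hone.symm
      _ < 2 / Real.sqrt Real.pi *
          (Real.exp (y^2) * ∫ s in Ioi w.re, Real.exp (-s^2) * Real.cos (2*s*w.im)) := by
        apply mul_lt_mul_of_pos_left _ (by positivity)
        apply mul_lt_mul_of_pos_left _ (Real.exp_pos _)
        exact hmain
  rcases hz with rfl | harg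
  · exact ⟨h0.ge, by simp [h0]⟩
  · by_cases hz0 : z = 0
    · subst hz0
      exact ⟨h0.ge, by simp [h0]⟩
    · have hlt := key z hz0 harg
      refine ⟨hlt.le, ?_, fun h => absurd h hz0⟩
      intro h
      exact absurd h (ne_of_gt hlt)
end

section
/- For every complex number z = x + iy with |Arg z| ≤ π/4 (i.e., x ≥ |y|), the real part of the error function satisfies Re(erf(z)) ≥ 0, with equality if and only if z = 0. -/
/-!
Write `z = x + iy`. Both `erf` and `erfc` are expressed through a primitive `G` of the entire
function `e^{-u²}`: `erf z` is `(2/√π)(G z - G 0)` by the fundamental theorem of calculus along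
the segment, and `erfc z` is `(2/√π)(lim G(z + t) - G z)`. On the half-strip `x + t ≥ 0`,
`|Im| ≤ |y|` the derivative of `G` is at most `e^{y² - (x+t)²}`, so `G(z + t) - G(x + t) → 0`
and the limit is the Gaussian integral; hence `erf z + erfc z = 1`. If `0 < x` and `|y| ≤ x`, then
`|e^{-(z+t)²}| = e^{y² - (x+t)²} < e^{-t²}` for `t > 0`, so `|erfc z| < 1` and
`Re erf z = 1 - Re erfc z > 0`.
-/

open Complex MeasureTheory

open Set Filter Topology Real

theorem norm_cexp_neg_sq (u : ℂ) : ‖cexp (-u ^ 2)‖ = rexp (u.im ^ 2 - u.re ^ 2) := by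
  rw [Complex.norm_exp]
  congr 1
  simp [sq]

theorem integral_Ioi_exp_neg_sq : ∫ t in Ioi (0:ℝ), rexp (-t ^ 2) = √π / 2 := by
  simpa using integral_gaussian_Ioi 1

theorem integral_Ioi_cexp_neg_sq : ∫ t in Ioi (0:ℝ), cexp (-(t : ℂ) ^ 2) = ((√π / 2 : ℝ) : ℂ) := by
  rw [← integral_Ioi_exp_neg_sq, ← integral_complex_ofReal]
  push_cast
  rfl

theorem integrable_cexp_neg_add_sq (z : ℂ) : Integrable fun t : ℝ => cexp (-(z + t) ^ 2) := by
  refine (integrable_cexp_quadratic (b := 1) (by simp) (-2 * z) (-z ^ 2)).congr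
    (Eventually.of_forall fun t => ?_)
  simp only
  ring_nf

theorem intervalIntegral_mul_comp_ofReal_mul_eq_sub {g G : ℂ → ℂ}
    (hG : ∀ u, HasDerivAt G (g u) u) (hg : Continuous g) (z : ℂ) :
    ∫ t in (0:ℝ)..1, z * g (t * z) = G z - G 0 := by
  have hderiv (t : ℝ) : HasDerivAt (fun s : ℝ => G (s * z)) (z * g (t * z)) t := by
    have := ((hG _).comp (t : ℂ) ((hasDerivAt_id _).mul_const z)).comp_ofReal
    simpa [mul_comm] using this
  rw [intervalIntegral.integral_eq_sub_of_hasDerivAt (fun t _ => hderiv t)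
    ((by fun_prop : Continuous fun t : ℝ => z * g (t * z)).intervalIntegrable _ _)]
  simp

def IsGaussianPrimitive (G : ℂ → ℂ) : Prop :=
  ∀ u, HasDerivAt G (cexp (-u ^ 2)) u

theorem exists_isGaussianPrimitive : ∃ G, IsGaussianPrimitive G := by
  obtain ⟨G, hG⟩ := (by fun_prop : Differentiable ℂ fun u : ℂ => cexp (-u ^ 2)).isExactOn_univ
  exact ⟨G, fun u => hG u (mem_univ u)⟩

namespace IsGaussianPrimitive

variable {G : ℂ → ℂ}

theorem norm_sub_le_of_le_re_of_abs_im_le (hG : IsGaussianPrimitive G) {r c : ℝ} (hr : 0 ≤ r)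
    {u v : ℂ} (hu : r ≤ u.re ∧ |u.im| ≤ c) (hv : r ≤ v.re ∧ |v.im| ≤ c) :
    ‖G u - G v‖ ≤ rexp (c ^ 2 - r ^ 2) * ‖u - v‖ := by
  set S : Set ℂ := {w | r ≤ w.re ∧ |w.im| ≤ c}
  have hS : Convex ℝ S := by
    have : S = {w | r ≤ w.re} ∩ ({w | w.im ≤ c} ∩ {w | -c ≤ w.im}) := by
      ext w; simp [S, abs_le, and_comm]
    rw [this]
    exact (convex_halfSpace_re_ge r).inter ((convex_halfSpace_im_le c).inter
      (convex_halfSpace_im_ge (-c)))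
  refine hS.norm_image_sub_le_of_norm_hasDerivWithin_le (fun w _ => (hG w).hasDerivWithinAt)
    (fun w hw => ?_) hv hu
  rw [norm_cexp_neg_sq, Real.exp_le_exp]
  have him : w.im ^ 2 ≤ c ^ 2 := by simpa using sq_le_sq' (abs_le.1 hw.2).1 (abs_le.1 hw.2).2
  have hre : r ^ 2 ≤ w.re ^ 2 := pow_le_pow_left₀ hr hw.1 2
  linarith

theorem tendsto_ofReal_atTop (hG : IsGaussianPrimitive G) :
    Tendsto (fun r : ℝ => G r) atTop (𝓝 (G 0 + ((√π / 2 : ℝ) : ℂ))) := by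
  have hint : IntegrableOn (fun t : ℝ => cexp (-(t : ℂ) ^ 2)) (Ioi 0) := by
    simpa using (integrable_cexp_neg_add_sq 0).integrableOn
  have hlim := (intervalIntegral_tendsto_integral_Ioi 0 hint tendsto_id).const_add (G 0)
  rw [integral_Ioi_cexp_neg_sq] at hlim
  refine hlim.congr fun r => ?_
  rw [intervalIntegral.integral_eq_sub_of_hasDerivAt (fun t _ => (hG t).comp_ofReal)
    ((by fun_prop : Continuous fun t : ℝ => cexp (-(t : ℂ) ^ 2)).intervalIntegrable _ _)]
  simp

theorem tendsto_add_ofReal_atTop (hG : IsGaussianPrimitive G) (z : ℂ) :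
    Tendsto (fun t : ℝ => G (z + t)) atTop (𝓝 (G 0 + ((√π / 2 : ℝ) : ℂ))) := by
  have hre : Tendsto (fun t : ℝ => z.re + t) atTop atTop :=
    tendsto_atTop_add_const_left _ _ tendsto_id
  have hbound : Tendsto (fun t : ℝ => rexp (z.im ^ 2 - (z.re + t) ^ 2) * |z.im|) atTop (𝓝 0) := by
    have hexp : Tendsto (fun t : ℝ => z.im ^ 2 - (z.re + t) ^ 2) atTop atBot := by
      simpa [sub_eq_add_neg] using tendsto_atBot_add_const_left _ (z.im ^ 2)
        (tendsto_neg_atTop_atBot.comp ((tendsto_pow_atTop two_ne_zero).comp hre))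
    simpa using (Real.tendsto_exp_atBot.comp hexp).mul_const |z.im|
  have hsmall : Tendsto (fun t : ℝ => G (z + t) - G ↑(z.re + t)) atTop (𝓝 0) := by
    refine squeeze_zero_norm' ?_ hbound
    filter_upwards [hre.eventually_ge_atTop 0] with t ht
    have := hG.norm_sub_le_of_le_re_of_abs_im_le ht (u := z + t) (v := ↑(z.re + t))
      (c := |z.im|) (by simp) (by simp)
    have hdist : ‖z - z.re‖ = |z.im| := by
      rw [show z - z.re = z.im * I by apply Complex.ext <;> simp]
      simp
    simpa [hdist] using this
  simpa using hsmall.add (hG.tendsto_ofReal_atTop.comp hre)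

theorem integral_Ioi_cexp_neg_add_sq (hG : IsGaussianPrimitive G) (z : ℂ) :
    ∫ t in Ioi (0:ℝ), cexp (-(z + t) ^ 2) = G 0 + ((√π / 2 : ℝ) : ℂ) - G z := by
  have hderiv (t : ℝ) : HasDerivAt (fun s : ℝ => G (z + s)) (cexp (-(z + t) ^ 2)) t := by
    simpa using ((hG _).comp (t : ℂ) ((hasDerivAt_id _).const_add z)).comp_ofReal
  simpa using integral_Ioi_of_hasDerivAt_of_tendsto' (a := 0) (fun t _ => hderiv t)
    (integrable_cexp_neg_add_sq z).integrableOn (hG.tendsto_add_ofReal_atTop z)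

end IsGaussianPrimitive

theorem erf_add_erfc (z : ℂ) : erf z + erfc z = 1 := by
  obtain ⟨G, hG⟩ := exists_isGaussianPrimitive
  have hπ : (√π : ℂ) ≠ 0 := by exact_mod_cast (Real.sqrt_pos.2 Real.pi_pos).ne'
  rw [erf, erfc, intervalIntegral_mul_comp_ofReal_mul_eq_sub hG (by fun_prop) z,
    hG.integral_Ioi_cexp_neg_add_sq z]
  push_cast
  field_simp
  ring

theorem setIntegral_lt_setIntegral {α : Type*} [MeasurableSpace α] {μ : Measure α} {s : Set α}
    {f g : α → ℝ} (hs : MeasurableSet s) (hμs : μ s ≠ 0) (hf : IntegrableOn f s μ)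
    (hg : IntegrableOn g s μ) (hlt : ∀ x ∈ s, f x < g x) :
    ∫ x in s, f x ∂μ < ∫ x in s, g x ∂μ := by
  rw [← sub_pos, ← integral_sub hg hf]
  refine (setIntegral_pos_iff_support_of_nonneg_ae ?_ (hg.sub hf)).2 ?_
  · filter_upwards [ae_restrict_mem hs] with x hx
    exact sub_nonneg.2 (hlt x hx).le
  · have : Function.support (g - f) ∩ s = s :=
      inter_eq_right.2 fun x hx => sub_ne_zero.2 (hlt x hx).ne'
    rw [this]
    exact pos_iff_ne_zero.2 hμs

theorem norm_erfc_lt_one {z : ℂ} (hre : 0 < z.re) (him : |z.im| ≤ z.re) : ‖erfc z‖ < 1 := by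
  have hpt (t : ℝ) (ht : t ∈ Ioi 0) : ‖cexp (-(z + t) ^ 2)‖ < rexp (-t ^ 2) := by
    rw [norm_cexp_neg_sq, Real.exp_lt_exp]
    have : z.im ^ 2 ≤ z.re ^ 2 := sq_le_sq' (abs_le.1 him).1 (abs_le.1 him).2
    simp only [add_re, ofReal_re, add_im, ofReal_im, add_zero]
    nlinarith [mul_pos hre (show 0 < t from ht)]
  have hlt : ∫ t in Ioi (0:ℝ), ‖cexp (-(z + t) ^ 2)‖ < √π / 2 := by
    rw [← integral_Ioi_exp_neg_sq]
    exact setIntegral_lt_setIntegral measurableSet_Ioi (by simp)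
      (integrable_cexp_neg_add_sq z).norm.integrableOn
      (by simpa using (integrable_exp_neg_mul_sq one_pos).integrableOn) hpt
  have hsqrt : 0 < √π := Real.sqrt_pos.2 Real.pi_pos
  calc ‖erfc z‖ ≤ 2 / √π * ∫ t in Ioi (0:ℝ), ‖cexp (-(z + t) ^ 2)‖ := by
        rw [erfc, norm_mul, Complex.norm_real, Real.norm_of_nonneg (by positivity)]
        gcongr
        exact norm_integral_le_integral_norm _
    _ < 2 / √π * (√π / 2) := by gcongr
    _ = 1 := by field_simp

theorem erf_zero : erf 0 = 0 := by
  simp [erf]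

theorem re_erf_pos {z : ℂ} (hz : |z.im| ≤ z.re) (hz0 : z ≠ 0) : 0 < (erf z).re := by
  have hre : 0 < z.re := by
    refine lt_of_le_of_ne ((abs_nonneg _).trans hz) fun h => hz0 ?_
    exact Complex.ext h.symm (abs_nonpos_iff.1 (h ▸ hz))
  have hsum := congrArg re (erf_add_erfc z)
  rw [add_re, one_re] at hsum
  linarith [(Complex.re_le_norm _).trans_lt (norm_erfc_lt_one hre hz)]

theorem re_erf_nonneg_of_arg (z : ℂ) (hz : |z.im| ≤ z.re) :
    0 ≤ (erf z).re ∧ ((erf z).re = 0 ↔ z = 0) := by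
  rcases eq_or_ne z 0 with rfl | hz0
  · simp [erf_zero]
  · have hpos := re_erf_pos hz hz0
    exact ⟨hpos.le, iff_of_false hpos.ne' hz0⟩
end

section
/- For all real x, y with x > 0 and y > 0, the complementary error function satisfies |erfc(x + iy)| < e^{y² − x²}/(x√π) · √(1 + y²/x²). -/
open Complex MeasureTheory

/-!
On the ray `x + iy + t`, `t > 0`, the integrand of `erfc` has modulus `e^{y²} e^{-(x+t)²}`, and
since `1 ≤ (x + t) / x` the Gaussian tail is dominated by `∫ (x+t)/x · e^{-(x+t)²} dt`, which has
the explicit primitive `-e^{-(x+t)²} / (2x)`. This gives `|erfc(x+iy)| ≤ e^{y²-x²} / (x√π)`;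
the factor `√(1 + y²/x²)` exceeds `1` as soon as `y ≠ 0`.
-/

open Set Filter Topology

section GaussianTail

variable (x : ℝ)

lemma hasDerivAt_neg_exp_neg_sq_add_div_two (t : ℝ) :
    HasDerivAt (fun s : ℝ => -Real.exp (-(x + s) ^ 2) / 2)
      ((x + t) * Real.exp (-(x + t) ^ 2)) t := by
  have hsq : HasDerivAt (fun s : ℝ => -(x + s) ^ 2) (-(2 * (x + t))) t := by
    simpa using (((hasDerivAt_id t).const_add x).fun_pow 2).fun_neg
  exact (hsq.exp.fun_neg.div_const 2).congr_deriv (by ring)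

lemma tendsto_neg_exp_neg_sq_add_div_two :
    Tendsto (fun s : ℝ => -Real.exp (-(x + s) ^ 2) / 2) atTop (𝓝 0) := by
  have hsq : Tendsto (fun s : ℝ => -(x + s) ^ 2) atTop atBot :=
    tendsto_neg_atBot_iff.mpr
      ((tendsto_pow_atTop two_ne_zero).comp (tendsto_atTop_add_const_left _ x tendsto_id))
  simpa using (Real.tendsto_exp_atBot.comp hsq).neg.div_const 2

variable {x}

lemma add_mul_exp_neg_sq_add_nonneg (hx : 0 ≤ x) {t : ℝ} (ht : t ∈ Ioi 0) :
    0 ≤ (x + t) * Real.exp (-(x + t) ^ 2) :=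
  mul_nonneg (add_nonneg hx (le_of_lt ht)) (Real.exp_pos _).le

lemma integrableOn_Ioi_add_mul_exp_neg_sq_add (hx : 0 ≤ x) :
    IntegrableOn (fun t : ℝ => (x + t) * Real.exp (-(x + t) ^ 2)) (Ioi 0) :=
  integrableOn_Ioi_deriv_of_nonneg' (fun t _ => hasDerivAt_neg_exp_neg_sq_add_div_two x t)
    (fun _ ht => add_mul_exp_neg_sq_add_nonneg hx ht) (tendsto_neg_exp_neg_sq_add_div_two x)

lemma integral_Ioi_add_mul_exp_neg_sq_add (hx : 0 ≤ x) :
    ∫ t in Ioi (0 : ℝ), (x + t) * Real.exp (-(x + t) ^ 2) = Real.exp (-x ^ 2) / 2 := by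
  rw [integral_Ioi_of_hasDerivAt_of_nonneg'
    (fun t _ => hasDerivAt_neg_exp_neg_sq_add_div_two x t)
    (fun _ ht => add_mul_exp_neg_sq_add_nonneg hx ht) (tendsto_neg_exp_neg_sq_add_div_two x)]
  simp only [add_zero, zero_sub, neg_div, neg_neg]

lemma integral_Ioi_exp_neg_sq_add_le (hx : 0 < x) :
    ∫ t in Ioi (0 : ℝ), Real.exp (-(x + t) ^ 2) ≤ Real.exp (-x ^ 2) / (2 * x) := by
  have hdom : ∀ t ∈ Ioi (0 : ℝ),
      Real.exp (-(x + t) ^ 2) ≤ x⁻¹ * ((x + t) * Real.exp (-(x + t) ^ 2)) := by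
    intro t ht
    rw [← mul_assoc, le_mul_iff_one_le_left (Real.exp_pos _), le_inv_mul_iff₀ hx]
    linarith [ht.out]
  calc ∫ t in Ioi (0 : ℝ), Real.exp (-(x + t) ^ 2)
      ≤ ∫ t in Ioi (0 : ℝ), x⁻¹ * ((x + t) * Real.exp (-(x + t) ^ 2)) :=
        integral_mono_of_nonneg (Eventually.of_forall fun _ => (Real.exp_pos _).le)
          ((integrableOn_Ioi_add_mul_exp_neg_sq_add hx.le).const_mul _)
          ((ae_restrict_iff' measurableSet_Ioi).mpr (Eventually.of_forall hdom))
    _ = Real.exp (-x ^ 2) / (2 * x) := by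
        rw [integral_const_mul, integral_Ioi_add_mul_exp_neg_sq_add hx.le]
        field_simp

end GaussianTail

lemma norm_cexp_neg_sq_add_ofReal (z : ℂ) (t : ℝ) :
    ‖cexp (-(z + t) ^ 2)‖ = Real.exp (z.im ^ 2) * Real.exp (-(z.re + t) ^ 2) := by
  rw [Complex.norm_exp, ← Real.exp_add]
  congr 1
  simp only [neg_re, sq, mul_re, add_re, add_im, ofReal_re, ofReal_im]
  ring

lemma norm_erfc_le (z : ℂ) (hz : 0 < z.re) :
    ‖erfc z‖ ≤ Real.exp (z.im ^ 2 - z.re ^ 2) / (z.re * Real.sqrt Real.pi) := by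
  have hπ : 0 < Real.sqrt Real.pi := Real.sqrt_pos.mpr Real.pi_pos
  have hint : ‖∫ t in Ioi (0 : ℝ), cexp (-(z + t) ^ 2)‖
      ≤ Real.exp (z.im ^ 2) * (Real.exp (-z.re ^ 2) / (2 * z.re)) :=
    calc ‖∫ t in Ioi (0 : ℝ), cexp (-(z + t) ^ 2)‖
        ≤ ∫ t in Ioi (0 : ℝ), ‖cexp (-(z + t) ^ 2)‖ := norm_integral_le_integral_norm _
      _ = Real.exp (z.im ^ 2) * ∫ t in Ioi (0 : ℝ), Real.exp (-(z.re + t) ^ 2) := by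
          simp only [norm_cexp_neg_sq_add_ofReal, integral_const_mul]
      _ ≤ Real.exp (z.im ^ 2) * (Real.exp (-z.re ^ 2) / (2 * z.re)) :=
          mul_le_mul_of_nonneg_left (integral_Ioi_exp_neg_sq_add_le hz) (Real.exp_pos _).le
  calc ‖erfc z‖ = 2 / Real.sqrt Real.pi * ‖∫ t in Ioi (0 : ℝ), cexp (-(z + t) ^ 2)‖ := by
        rw [erfc, norm_mul, Complex.norm_real, Real.norm_of_nonneg (by positivity)]
    _ ≤ 2 / Real.sqrt Real.pi * (Real.exp (z.im ^ 2) * (Real.exp (-z.re ^ 2) / (2 * z.re))) :=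
        mul_le_mul_of_nonneg_left hint (by positivity)
    _ = Real.exp (z.im ^ 2 - z.re ^ 2) / (z.re * Real.sqrt Real.pi) := by
        rw [sub_eq_add_neg, Real.exp_add]
        field_simp

theorem strand_bound (x y : ℝ) (hx : 0 < x) (hy : 0 < y) :
    ‖erfc (x + y * Complex.I)‖ <
      Real.exp (y ^ 2 - x ^ 2) / (x * Real.sqrt Real.pi) * Real.sqrt (1 + y ^ 2 / x ^ 2) := by
  have hle : ‖erfc (x + y * Complex.I)‖ ≤ Real.exp (y ^ 2 - x ^ 2) / (x * Real.sqrt Real.pi) := by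
    simpa using norm_erfc_le (x + y * Complex.I) (by simpa using hx)
  have hsqrt : 1 < Real.sqrt (1 + y ^ 2 / x ^ 2) :=
    Real.lt_sqrt_of_sq_lt (by simpa using (by positivity : 0 < y ^ 2 / x ^ 2))
  calc ‖erfc (x + y * Complex.I)‖ ≤ Real.exp (y ^ 2 - x ^ 2) / (x * Real.sqrt Real.pi) := hle
    _ < Real.exp (y ^ 2 - x ^ 2) / (x * Real.sqrt Real.pi) * Real.sqrt (1 + y ^ 2 / x ^ 2) :=
        lt_mul_of_one_lt_right (by positivity) hsqrt
end

section
/- Let 0 ≤ a ≤ x with x ≤ √(2/π). Then the integral ∫_a^x [cos(2t√(t²−a²)) + t·sin(2t√(t²−a²))/√(t²−a²)] dt is non-negative, and it equals zero if and only if a = x. -/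
open Complex MeasureTheory

/-!
For `0 ≤ t ≤ √(2/π)` the phase `φ = 2t√(t²−a²)` satisfies `0 ≤ φ ≤ 2t² ≤ 4/π < π/2`, so
`cos φ > 0` and `sin φ ≥ 0`: the integrand is positive on `[a, x]`. Since `|sin φ| ≤ |φ|`, it is
dominated by `1 + 2t²`, hence integrable, and its integral over a nondegenerate interval is positive.
-/

noncomputable def keyIntegrand (a t : ℝ) : ℝ :=
  Real.cos (2 * t * √(t ^ 2 - a ^ 2)) + t * Real.sin (2 * t * √(t ^ 2 - a ^ 2)) / √(t ^ 2 - a ^ 2)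

lemma sqrt_sq_sub_sq_le (a : ℝ) {t : ℝ} (ht : 0 ≤ t) : √(t ^ 2 - a ^ 2) ≤ t :=
  Real.sqrt_le_iff.2 ⟨ht, by nlinarith [sq_nonneg a]⟩

lemma two_mul_mul_sqrt_sq_sub_sq_lt_pi_div_two (a : ℝ) {t : ℝ} (ht₀ : 0 ≤ t)
    (ht : t ≤ √(2 / Real.pi)) : 2 * t * √(t ^ 2 - a ^ 2) < Real.pi / 2 := by
  have hπ := Real.pi_gt_three
  have ht_sq : Real.pi * t ^ 2 ≤ 2 := by
    rw [Real.le_sqrt ht₀ (by positivity), le_div_iff₀ (by positivity)] at ht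
    linarith
  have hs := sqrt_sq_sub_sq_le a ht₀
  calc 2 * t * √(t ^ 2 - a ^ 2) ≤ 2 * t ^ 2 := by nlinarith
    _ < Real.pi / 2 := by nlinarith

lemma keyIntegrand_pos (a : ℝ) {t : ℝ} (ht₀ : 0 ≤ t) (ht : t ≤ √(2 / Real.pi)) :
    0 < keyIntegrand a t := by
  have hφ₀ : 0 ≤ 2 * t * √(t ^ 2 - a ^ 2) := by positivity
  have hφ := two_mul_mul_sqrt_sq_sub_sq_lt_pi_div_two a ht₀ ht
  have hcos : 0 < Real.cos (2 * t * √(t ^ 2 - a ^ 2)) :=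
    Real.cos_pos_of_mem_Ioo ⟨by linarith [Real.pi_pos], hφ⟩
  have hsin : 0 ≤ Real.sin (2 * t * √(t ^ 2 - a ^ 2)) :=
    Real.sin_nonneg_of_nonneg_of_le_pi hφ₀ (by linarith [Real.pi_pos])
  unfold keyIntegrand
  positivity

lemma abs_mul_sin_two_mul_mul_div_le (t : ℝ) {s : ℝ} (hs : 0 ≤ s) :
    |t * Real.sin (2 * t * s) / s| ≤ 2 * t ^ 2 := by
  rcases hs.eq_or_lt with rfl | hs
  · rw [div_zero, abs_zero]
    positivity
  · have hsin : |Real.sin (2 * t * s)| ≤ 2 * |t| * s := by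
      simpa [abs_mul, abs_of_pos hs] using Real.abs_sin_le_abs (x := 2 * t * s)
    rw [abs_div, abs_mul, abs_of_pos hs, div_le_iff₀ hs]
    nlinarith [abs_nonneg t, sq_abs t]

lemma abs_keyIntegrand_le (a t : ℝ) : |keyIntegrand a t| ≤ 1 + 2 * t ^ 2 :=
  (abs_add_le _ _).trans <| add_le_add (Real.abs_cos_le_one _)
    (abs_mul_sin_two_mul_mul_div_le t (Real.sqrt_nonneg _))

/-- Where `t² ≤ a²`, `√` and division return `0`, so `keyIntegrand` can jump at `t = ±a`:
integrability comes from domination rather than continuity. -/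
lemma intervalIntegrable_keyIntegrand (a b c : ℝ) :
    IntervalIntegrable (keyIntegrand a) volume b c := by
  have hbound : Continuous fun t : ℝ => 1 + 2 * t ^ 2 := by fun_prop
  refine (hbound.intervalIntegrable b c).mono_fun' ?_ ?_
  · unfold keyIntegrand
    exact (by fun_prop : Measurable _).aestronglyMeasurable
  · exact Filter.Eventually.of_forall fun t => abs_keyIntegrand_le a t

lemma integral_keyIntegrand_pos {a x : ℝ} (ha : 0 ≤ a) (hax : a < x)
    (hx : x ≤ √(2 / Real.pi)) : 0 < ∫ t in a..x, keyIntegrand a t :=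
  intervalIntegral.intervalIntegral_pos_of_pos_on (intervalIntegrable_keyIntegrand a a x)
    (fun _ ht => keyIntegrand_pos a (ha.trans ht.1.le) (ht.2.le.trans hx)) hax

theorem integral_nonneg_key (a x : ℝ) (ha : 0 ≤ a) (hax : a ≤ x)
    (hx : x ≤ Real.sqrt (2 / Real.pi)) :
    0 ≤ (∫ t in a..x, (Real.cos (2 * t * Real.sqrt (t ^ 2 - a ^ 2)) +
        t * Real.sin (2 * t * Real.sqrt (t ^ 2 - a ^ 2)) / Real.sqrt (t ^ 2 - a ^ 2))) ∧
    ((∫ t in a..x, (Real.cos (2 * t * Real.sqrt (t ^ 2 - a ^ 2)) +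
        t * Real.sin (2 * t * Real.sqrt (t ^ 2 - a ^ 2)) / Real.sqrt (t ^ 2 - a ^ 2))) = 0 ↔
      a = x) := by
  change 0 ≤ ∫ t in a..x, keyIntegrand a t ∧ ((∫ t in a..x, keyIntegrand a t) = 0 ↔ a = x)
  rcases hax.eq_or_lt with rfl | hlt
  · simp
  · have hpos := integral_keyIntegrand_pos ha hlt hx
    exact ⟨hpos.le, iff_of_false hpos.ne' hlt.ne⟩
end

section
/- For 0 ≤ a < x ≤ √(2/π), the improper integral ∫_a^x t·sin(2t√(t²−a²))/√(t²−a²) dt converges and is strictly positive when a > 0 (or a = 0 and x > 0). -/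
open MeasureTheory

/-!
The integrand is dominated by `t / √(t² - a²)`, the derivative of `√(t² - a²)`, which is
nonnegative and hence integrable. On `(a, x]` the sine argument satisfies
`0 < 2t√(t² - a²) ≤ 2x² ≤ 4/π < π`, so the integrand is positive there.
-/

namespace Real

theorem hasDerivAt_sqrt_sq_sub_sq {a t : ℝ} (h : a ^ 2 < t ^ 2) :
    HasDerivAt (fun s => √(s ^ 2 - a ^ 2)) (t / √(t ^ 2 - a ^ 2)) t := by
  have hsq : HasDerivAt (fun s : ℝ => s ^ 2 - a ^ 2) (2 * t) t := by
    simpa using (hasDerivAt_pow 2 t).sub_const (a ^ 2)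
  convert hsq.sqrt (sub_pos.mpr h).ne' using 1
  field_simp

theorem integrableOn_div_sqrt_sq_sub_sq {a x : ℝ} (ha : 0 ≤ a) :
    IntegrableOn (fun t => t / √(t ^ 2 - a ^ 2)) (Set.Ioc a x) := by
  refine intervalIntegral.integrableOn_deriv_of_nonneg (g := fun s => √(s ^ 2 - a ^ 2))
    (by fun_prop) (fun t ht => hasDerivAt_sqrt_sq_sub_sq ?_) (fun t ht => ?_)
  · nlinarith [ht.1]
  · have : 0 < t := ha.trans_lt ht.1
    positivity

theorem integrableOn_mul_sin_div_sqrt_sq_sub_sq {a x : ℝ} {φ : ℝ → ℝ} (ha : 0 ≤ a)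
    (hφ : Measurable φ) :
    IntegrableOn (fun t => t * sin (φ t) / √(t ^ 2 - a ^ 2)) (Set.Ioc a x) := by
  refine (integrableOn_div_sqrt_sq_sub_sq ha).mono'
    (by fun_prop : Measurable _).aestronglyMeasurable ?_
  filter_upwards [ae_restrict_mem measurableSet_Ioc] with t ht
  have ht₀ : 0 < t := ha.trans_lt ht.1
  rw [norm_div, norm_mul, norm_of_nonneg ht₀.le, norm_of_nonneg (sqrt_nonneg _)]
  gcongr
  exact mul_le_of_le_one_right ht₀.le (abs_sin_le_one _)

theorem four_div_pi_lt_pi : 4 / π < π := by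
  rw [div_lt_iff₀ pi_pos]
  nlinarith [pi_gt_three]

theorem two_mul_mul_sqrt_sq_sub_sq_lt_pi {a t : ℝ} (ha : 0 ≤ a) (hat : a ≤ t)
    (ht : t ≤ √(2 / π)) : 2 * t * √(t ^ 2 - a ^ 2) < π := by
  have ht₀ : 0 ≤ t := ha.trans hat
  have hsqrt_le : √(t ^ 2 - a ^ 2) ≤ t :=
    (sqrt_le_sqrt (by nlinarith)).trans_eq (sqrt_sq ht₀)
  have ht_sq : t ^ 2 ≤ 2 / π := by
    calc t ^ 2 ≤ √(2 / π) ^ 2 := pow_le_pow_left₀ ht₀ ht 2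
      _ = 2 / π := sq_sqrt (by positivity)
  calc 2 * t * √(t ^ 2 - a ^ 2) ≤ 2 * t ^ 2 := by nlinarith
    _ ≤ 4 / π := by linarith [show 4 / π = 2 * (2 / π) by ring]
    _ < π := four_div_pi_lt_pi

end Real

theorem singular_integral_pos (a x : ℝ) (ha : 0 ≤ a) (hax : a < x)
    (hx : x ≤ Real.sqrt (2 / Real.pi)) :
    IntegrableOn
      (fun t => t * Real.sin (2 * t * Real.sqrt (t ^ 2 - a ^ 2)) / Real.sqrt (t ^ 2 - a ^ 2))
      (Set.Ioc a x) ∧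
    0 < ∫ t in a..x,
        t * Real.sin (2 * t * Real.sqrt (t ^ 2 - a ^ 2)) / Real.sqrt (t ^ 2 - a ^ 2) := by
  have hint := Real.integrableOn_mul_sin_div_sqrt_sq_sub_sq (x := x) ha
    (φ := fun t => 2 * t * √(t ^ 2 - a ^ 2)) (by fun_prop)
  refine ⟨hint, intervalIntegral.intervalIntegral_pos_of_pos_on
    ((intervalIntegrable_iff_integrableOn_Ioc_of_le hax.le).mpr hint) (fun t ht => ?_) hax⟩
  have ht₀ : 0 < t := ha.trans_lt ht.1
  have hsqrt : 0 < √(t ^ 2 - a ^ 2) := Real.sqrt_pos.mpr (by nlinarith [ht.1])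
  have hsin : 0 < Real.sin (2 * t * √(t ^ 2 - a ^ 2)) :=
    Real.sin_pos_of_pos_of_lt_pi (by positivity)
      (Real.two_mul_mul_sqrt_sq_sub_sq_lt_pi ha ht.1.le (ht.2.le.trans hx))
  positivity
end
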